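/- (Two-asset minimal product measure.) Let m = 2, so 𝓛 consists of the four subsets of {1,2}, and assume 1 ≥ b_1 ≥ b_2 ≥ 0. Define q' : 𝓛 → ℝ as follows: if b_1 + b_2 ≤ 1, set q'(∅) = 1 − b_1 − b_2, q'({1}) = b_1, q'({2}) = b_2, q'({1,2}) = 0; if b_1 + b_2 > 1, set q'({1,2}) = b_1 + b_2 − 1, q'({1}) = 1 − b_2, q'({2}) = 1 − b_1, q'(∅) = 0. Then for every fibrewise supermodular f : 𝓛^n → ℝ and every x ∈ M_n(b), E_x(f) ≥ E_{(q')^{⊗n}}(f); that is, the minimum over M_n(b) is attained at the product measure (q')^{⊗n}. -/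
import Mathlib


noncomputable section

open Finset

/-- `ℓ_i` : indicator of `i ∈ S`. -/
def ell {m : ℕ} (i : Fin m) (S : Finset (Fin m)) : ℝ := if i ∈ S then 1 else 0

/-- `μ_j = {1,…,j}` (the first `j` elements of `Fin m`). -/
def mu (m j : ℕ) : Finset (Fin m) := Finset.univ.filter fun i => (i : ℕ) < j

/-- paper `b_j` for `j = 0,…,m`, with `b_0 = 1` (and `0` beyond `m`). -/
def bpaper {m : ℕ} (b : Fin m → ℝ) (j : ℕ) : ℝ :=
  if j = 0 then 1 else if h : j - 1 < m then b ⟨j - 1, h⟩ else 0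

/-- the upper supermodular vertex measure `q*`:
`q*(μ_j) = b_j − b_{j+1}` for `0 ≤ j ≤ m−1`, `q*(μ_m) = b_m`, and `q* = 0` elsewhere. -/
def qStar {m : ℕ} (b : Fin m → ℝ) (S : Finset (Fin m)) : ℝ :=
  ∑ j ∈ Finset.range (m + 1), if S = mu m j then bpaper b j - bpaper b (j + 1) else 0

/-- the lower supermodular vertex measure `q_*`:
`q_*(∅) = 1 − Σᵢ bᵢ`, `q_*({i}) = bᵢ`, and `q_* = 0` elsewhere. -/
def qLow {m : ℕ} (b : Fin m → ℝ) (S : Finset (Fin m)) : ℝ :=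
  if S = ∅ then 1 - ∑ i, b i else ∑ i : Fin m, if S = {i} then b i else 0

/-- membership in `M_1(b)`: a probability function with `E_x(ℓ_i) = b_i` for all `i`. -/
def MemM1 {m : ℕ} (b : Fin m → ℝ) (x : Finset (Fin m) → ℝ) : Prop :=
  (∀ S, 0 ≤ x S) ∧ (∑ S, x S = 1) ∧ (∀ i, ∑ S, ell i S * x S = b i)

/-- membership in `M_n(b)`: a probability function on `𝓛^n` satisfying, for every step `k`,
every prefix `λ` and every `i`, the conditional moment condition. -/
def MemMn {m n : ℕ} (b : Fin m → ℝ) (x : (Fin n → Finset (Fin m)) → ℝ) : Prop :=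
  (∀ ω, 0 ≤ x ω) ∧ (∑ ω, x ω = 1) ∧
  (∀ (k : Fin n) (lam : Fin n → Finset (Fin m)) (i : Fin m),
    (∑ ω, if ∀ j : Fin n, j < k → ω j = lam j then ell i (ω k) * x ω else 0) =
      b i * ∑ ω, if ∀ j : Fin n, j < k → ω j = lam j then x ω else 0)

/-- supermodular function on `𝓛`. -/
def Supermod {m : ℕ} (f : Finset (Fin m) → ℝ) : Prop :=
  ∀ S T, f S + f T ≤ f (S ∪ T) + f (S ∩ T)

/-- fibrewise supermodular function on `𝓛^n`. -/
def FibSupermod {m n : ℕ} (f : (Fin n → Finset (Fin m)) → ℝ) : Prop :=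
  ∀ (k : Fin n) (lam : Fin n → Finset (Fin m)),
    Supermod fun S => f (Function.update lam k S)

/-- the product measure `q^{⊗n}`. -/
def prodM {m n : ℕ} (q : Finset (Fin m) → ℝ) (ω : Fin n → Finset (Fin m)) : ℝ :=
  ∏ k, q (ω k)

/-- the two-asset minimal one-step measure `q'`. -/
def qTwo (b1 b2 : ℝ) (S : Finset (Fin 2)) : ℝ :=
  if b1 + b2 ≤ 1 then
    (if S = ∅ then 1 - b1 - b2 else if S = {0} then b1 else if S = {1} then b2 else 0)
  else
    (if S = Finset.univ then b1 + b2 - 1 else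
      if S = {0} then 1 - b2 else if S = {1} then 1 - b1 else 0)


/-! ### Auxiliary lemmas -/

lemma prodM_nonneg {m n : ℕ} {q : Finset (Fin m) → ℝ} (hq : ∀ S, 0 ≤ q S)
    (ω : Fin n → Finset (Fin m)) : 0 ≤ prodM q ω :=
  Finset.prod_nonneg fun k _ => hq (ω k)

lemma prodM_cons {m n : ℕ} (q : Finset (Fin m) → ℝ) (S : Finset (Fin m))
    (ω' : Fin n → Finset (Fin m)) :
    prodM q (Fin.cons S ω') = q S * prodM q ω' := by
  simp [prodM, Fin.prod_univ_succ]

lemma sum_cons' {m n : ℕ} (F : (Fin (n+1) → Finset (Fin m)) → ℝ) :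
    ∑ ω, F ω = ∑ S : Finset (Fin m), ∑ ω' : Fin n → Finset (Fin m), F (Fin.cons S ω') := by
  rw [← (Fin.consEquiv fun _ : Fin (n+1) => Finset (Fin m)).sum_comp F]
  rw [Fintype.sum_prod_type]
  rfl

lemma prefix_cons {m n : ℕ} (k : Fin n) (S A : Finset (Fin m))
    (ω' lam' : Fin n → Finset (Fin m)) :
    (∀ j : Fin (n+1), j < Fin.succ k →
        (Fin.cons S ω' : Fin (n+1) → Finset (Fin m)) j
          = (Fin.cons A lam' : Fin (n+1) → Finset (Fin m)) j) ↔
      (S = A ∧ ∀ j : Fin n, j < k → ω' j = lam' j) := by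
  constructor
  · intro h
    refine ⟨h 0 (Fin.succ_pos k), fun j hj => ?_⟩
    have := h j.succ (Fin.succ_lt_succ_iff.mpr hj)
    simpa using this
  · rintro ⟨rfl, h⟩ j hj
    induction j using Fin.cases with
    | zero => simp
    | succ j => simp [h j (Fin.succ_lt_succ_iff.mp hj)]

lemma cond_sum_cons {m n : ℕ} (k : Fin n) (A : Finset (Fin m))
    (lam' : Fin n → Finset (Fin m)) (G : (Fin (n+1) → Finset (Fin m)) → ℝ) :
    (∑ ω, if (∀ j : Fin (n+1), j < Fin.succ k →
        ω j = (Fin.cons A lam' : Fin (n+1) → Finset (Fin m)) j) then G ω else 0)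
      = ∑ ω' : Fin n → Finset (Fin m),
          if (∀ j : Fin n, j < k → ω' j = lam' j) then G (Fin.cons A ω') else 0 := by
  rw [sum_cons']
  rw [Finset.sum_eq_single A]
  · refine Finset.sum_congr rfl fun ω' _ => ?_
    refine if_congr ?_ rfl rfl
    rw [prefix_cons]; simp
  · intro S _ hS
    refine Finset.sum_eq_zero fun ω' _ => ?_
    rw [if_neg]
    rw [prefix_cons]
    exact fun h => hS h.1
  · intro h; exact absurd (Finset.mem_univ A) h

/-- the product measure lies in `M_n(b)`. -/
lemma prod_memMn {m : ℕ} (b : Fin m → ℝ) (q : Finset (Fin m) → ℝ) (hq : MemM1 b q) :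
    ∀ n, MemMn b (fun ω : Fin n → Finset (Fin m) => prodM q ω) := by
  obtain ⟨hq0, hq1, hq2⟩ := hq
  intro n
  induction n with
  | zero =>
    exact ⟨fun ω => prodM_nonneg hq0 ω, by simp [Fintype.sum_unique, prodM],
      fun k => k.elim0⟩
  | succ n IH =>
    obtain ⟨ih0, ih1, ih2⟩ := IH
    have ih1' : ∑ ω' : Fin n → Finset (Fin m), prodM q ω' = 1 := ih1
    refine ⟨fun ω => prodM_nonneg hq0 ω, ?_, ?_⟩
    · rw [sum_cons']
      have e2 : ∀ S : Finset (Fin m),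
          ∑ ω' : Fin n → Finset (Fin m), prodM q (Fin.cons S ω') = q S := by
        intro S
        simp only [prodM_cons]
        rw [← Finset.mul_sum, ih1', mul_one]
      rw [Finset.sum_congr rfl fun S _ => e2 S, hq1]
    · intro k lam i
      induction k using Fin.cases with
      | zero =>
        simp only [Fin.not_lt_zero, false_implies, implies_true, if_true]
        rw [sum_cons', sum_cons']
        have e1 : ∀ S : Finset (Fin m),
            ∑ ω' : Fin n → Finset (Fin m),
              ell i ((Fin.cons S ω' : Fin (n+1) → _) 0) * prodM q (Fin.cons S ω')
              = ell i S * q S := by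
          intro S
          simp only [Fin.cons_zero, prodM_cons, ← mul_assoc]
          rw [← Finset.mul_sum, ih1', mul_one]
        have e2 : ∀ S : Finset (Fin m),
            ∑ ω' : Fin n → Finset (Fin m), prodM q (Fin.cons S ω') = q S := by
          intro S
          simp only [prodM_cons]
          rw [← Finset.mul_sum, ih1', mul_one]
        rw [Finset.sum_congr rfl fun S _ => e1 S, Finset.sum_congr rfl fun S _ => e2 S,
          hq2 i, hq1, mul_one]
      | succ k' =>
        obtain ⟨A, lam', rfl⟩ : ∃ A lam', lam = Fin.cons A lam' :=
          ⟨lam 0, Fin.tail lam, (Fin.cons_self_tail lam).symm⟩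
        rw [cond_sum_cons, cond_sum_cons]
        simp only [Fin.cons_succ, prodM_cons]
        have t1 : ∀ (F : (Fin n → Finset (Fin m)) → ℝ),
            (∑ ω' : Fin n → Finset (Fin m),
              if (∀ j : Fin n, j < k' → ω' j = lam' j) then q A * F ω' else 0)
            = q A * ∑ ω' : Fin n → Finset (Fin m),
                if (∀ j : Fin n, j < k' → ω' j = lam' j) then F ω' else 0 := by
          intro F
          rw [Finset.mul_sum]
          exact Finset.sum_congr rfl fun ω' _ => by split <;> simp
        calc (∑ ω' : Fin n → Finset (Fin m),
              if (∀ j : Fin n, j < k' → ω' j = lam' j) then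
                ell i (ω' k') * (q A * prodM q ω') else 0)
            = ∑ ω' : Fin n → Finset (Fin m),
              if (∀ j : Fin n, j < k' → ω' j = lam' j) then
                q A * (ell i (ω' k') * prodM q ω') else 0 :=
              Finset.sum_congr rfl fun ω' _ => by rw [mul_left_comm]
          _ = q A * ∑ ω' : Fin n → Finset (Fin m),
              if (∀ j : Fin n, j < k' → ω' j = lam' j) then
                ell i (ω' k') * prodM q ω' else 0 := t1 _
          _ = q A * (b i * ∑ ω' : Fin n → Finset (Fin m),
              if (∀ j : Fin n, j < k' → ω' j = lam' j) then prodM q ω' else 0) := by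
              rw [ih2 k' lam' i]
          _ = b i * (q A * ∑ ω' : Fin n → Finset (Fin m),
              if (∀ j : Fin n, j < k' → ω' j = lam' j) then prodM q ω' else 0) := by ring
          _ = b i * ∑ ω' : Fin n → Finset (Fin m),
              if (∀ j : Fin n, j < k' → ω' j = lam' j) then q A * prodM q ω' else 0 := by
              rw [t1]

/-- the main induction: if `q ∈ M_1(b)` minimizes every supermodular expectation over
`M_1(b)`, then `q^{⊗n}` minimizes every fibrewise supermodular expectation over `M_n(b)`. -/
lemma main_ind {m : ℕ} (b : Fin m → ℝ) (q : Finset (Fin m) → ℝ) (hq : MemM1 b q)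
    (hmin : ∀ (g : Finset (Fin m) → ℝ) (x : Finset (Fin m) → ℝ), Supermod g → MemM1 b x →
      ∑ S, g S * q S ≤ ∑ S, g S * x S) :
    ∀ (n : ℕ) (f : (Fin n → Finset (Fin m)) → ℝ), FibSupermod f →
      ∀ x, MemMn b x → ∑ ω, f ω * prodM q ω ≤ ∑ ω, f ω * x ω := by
  intro n
  induction n with
  | zero =>
    intro f hf x hx
    have hx1 := hx.2.1
    rw [Fintype.sum_unique] at hx1
    rw [Fintype.sum_unique, Fintype.sum_unique, hx1]
    simp [prodM]
  | succ n IH =>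
    intro f hf x hx
    obtain ⟨hx0, hx1, hx2⟩ := hx
    set p : Finset (Fin m) → ℝ := fun S => ∑ ω' : Fin n → Finset (Fin m), x (Fin.cons S ω')
      with hp
    have hq0 : ∀ S, 0 ≤ q S := hq.1
    have hp0 : ∀ S, 0 ≤ p S := fun S => Finset.sum_nonneg fun _ _ => hx0 _
    have hzero : ∀ S, p S = 0 → ∀ ω' : Fin n → Finset (Fin m), x (Fin.cons S ω') = 0 := by
      intro S hS ω'
      refine le_antisymm ?_ (hx0 _)
      calc x (Fin.cons S ω') ≤ p S :=
            Finset.single_le_sum (f := fun ω' : Fin n → Finset (Fin m) => x (Fin.cons S ω'))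
              (fun _ _ => hx0 _) (Finset.mem_univ ω')
        _ = 0 := hS
    have hpM : MemM1 b p := by
      refine ⟨hp0, by rw [hp, ← sum_cons']; exact hx1, fun i => ?_⟩
      have h0 := hx2 0 (fun _ => ∅) i
      simp only [Fin.not_lt_zero, false_implies, implies_true, if_true] at h0
      rw [hx1, mul_one] at h0
      rw [← h0, sum_cons']
      refine Finset.sum_congr rfl fun S _ => ?_
      rw [hp, Finset.mul_sum]
      exact Finset.sum_congr rfl fun ω' _ => by rw [Fin.cons_zero]
    set h : Finset (Fin m) → ℝ :=
      fun S => ∑ ω' : Fin n → Finset (Fin m), f (Fin.cons S ω') * prodM q ω' with hh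
    have hsuper : Supermod h := by
      intro S T
      have key : ∀ ω' : Fin n → Finset (Fin m),
          (f (Fin.cons S ω') + f (Fin.cons T ω')) * prodM q ω'
            ≤ (f (Fin.cons (S ∪ T) ω') + f (Fin.cons (S ∩ T) ω')) * prodM q ω' := by
        intro ω'
        refine mul_le_mul_of_nonneg_right ?_ (prodM_nonneg hq0 ω')
        have hs := hf 0 (Fin.cons S ω') S T
        simpa [Fin.update_cons_zero] using hs
      calc h S + h T
          = ∑ ω' : Fin n → Finset (Fin m),
              (f (Fin.cons S ω') + f (Fin.cons T ω')) * prodM q ω' := by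
            rw [hh, ← Finset.sum_add_distrib]
            exact Finset.sum_congr rfl fun ω' _ => by ring
        _ ≤ ∑ ω' : Fin n → Finset (Fin m),
              (f (Fin.cons (S ∪ T) ω') + f (Fin.cons (S ∩ T) ω')) * prodM q ω' :=
            Finset.sum_le_sum fun ω' _ => key ω'
        _ = h (S ∪ T) + h (S ∩ T) := by
            rw [hh, ← Finset.sum_add_distrib]
            exact Finset.sum_congr rfl fun ω' _ => by ring
    have hcond : ∀ S, p S * h S
        ≤ ∑ ω' : Fin n → Finset (Fin m), f (Fin.cons S ω') * x (Fin.cons S ω') := by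
      intro S
      by_cases hS : p S = 0
      · simp [hS, hzero S hS]
      · have hpSpos : 0 < p S := lt_of_le_of_ne (hp0 S) (Ne.symm hS)
        set y : (Fin n → Finset (Fin m)) → ℝ := fun ω' => x (Fin.cons S ω') / p S with hy
        have hyM : MemMn b y := by
          refine ⟨fun ω' => div_nonneg (hx0 _) (hp0 S), ?_, ?_⟩
          · rw [hy]
            rw [← Finset.sum_div]
            rw [hp]  -- p S is definitional
            exact div_self hS
          · intro k lam' i
            have hc := hx2 k.succ (Fin.cons S lam') i
            rw [cond_sum_cons, cond_sum_cons] at hc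
            simp only [Fin.cons_succ] at hc
            simp only [hy, ← mul_div_assoc]
            have pull : ∀ (F : (Fin n → Finset (Fin m)) → ℝ),
                (∑ ω' : Fin n → Finset (Fin m),
                  if (∀ j : Fin n, j < k → ω' j = lam' j) then F ω' / p S else 0)
                = (∑ ω' : Fin n → Finset (Fin m),
                  if (∀ j : Fin n, j < k → ω' j = lam' j) then F ω' else 0) / p S := by
              intro F
              rw [Finset.sum_div]
              exact Finset.sum_congr rfl fun ω' _ => by split <;> simp
            rw [pull, pull, hc, mul_div_assoc]
        have hfS : FibSupermod fun ω' : Fin n → Finset (Fin m) => f (Fin.cons S ω') := by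
          intro k lam'
          simpa [Fin.cons_update] using hf k.succ (Fin.cons S lam')
        have hIH := IH _ hfS y hyM
        calc p S * h S ≤ p S * ∑ ω' : Fin n → Finset (Fin m), f (Fin.cons S ω') * y ω' :=
              mul_le_mul_of_nonneg_left hIH (hp0 S)
          _ = ∑ ω' : Fin n → Finset (Fin m), f (Fin.cons S ω') * x (Fin.cons S ω') := by
              rw [Finset.mul_sum]
              refine Finset.sum_congr rfl fun ω' _ => ?_
              rw [hy]
              field_simp
    calc ∑ ω, f ω * prodM q ω = ∑ S, h S * q S := by
          rw [sum_cons']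
          refine Finset.sum_congr rfl fun S _ => ?_
          rw [hh, Finset.sum_mul]
          exact Finset.sum_congr rfl fun ω' _ => by rw [prodM_cons]; ring
      _ ≤ ∑ S, h S * p S := hmin h p hsuper hpM
      _ = ∑ S, p S * h S := by simp [mul_comm]
      _ ≤ ∑ S, ∑ ω' : Fin n → Finset (Fin m), f (Fin.cons S ω') * x (Fin.cons S ω') :=
          Finset.sum_le_sum fun S _ => hcond S
      _ = ∑ ω, f ω * x ω := (sum_cons' (fun ω => f ω * x ω)).symm

lemma sum_L2 (F : Finset (Fin 2) → ℝ) :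
    ∑ S, F S = F ∅ + F {0} + F {1} + F Finset.univ := by
  rw [show (Finset.univ : Finset (Finset (Fin 2)))
      = {∅, {0}, {1}, Finset.univ} from by decide]
  rw [Finset.sum_insert (by decide), Finset.sum_insert (by decide),
    Finset.sum_insert (by decide), Finset.sum_singleton]
  ring

lemma qTwo_memM1 (b1 b2 : ℝ) (h1 : b1 ≤ 1) (h2 : b2 ≤ b1) (h3 : 0 ≤ b2) :
    MemM1 ![b1, b2] (qTwo b1 b2) := by
  refine ⟨?_, ?_, ?_⟩
  · intro S
    unfold qTwo
    split_ifs <;> linarith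
  · rw [sum_L2]
    by_cases hb : b1 + b2 ≤ 1 <;>
      simp (config := { decide := true }) [qTwo, hb] <;> ring
  · intro i
    fin_cases i
    · rw [sum_L2]
      by_cases hb : b1 + b2 ≤ 1 <;>
        simp (config := { decide := true }) [ell, qTwo, hb] <;> ring
    · rw [sum_L2]
      by_cases hb : b1 + b2 ≤ 1 <;>
        simp (config := { decide := true }) [ell, qTwo, hb] <;> ring

lemma qTwo_min (b1 b2 : ℝ) (h1 : b1 ≤ 1) (h2 : b2 ≤ b1) (h3 : 0 ≤ b2) :
    ∀ (g x : Finset (Fin 2) → ℝ), Supermod g → MemM1 ![b1, b2] x →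
      ∑ S, g S * qTwo b1 b2 S ≤ ∑ S, g S * x S := by
  intro g x hg hx
  obtain ⟨hx0, hx1, hx2⟩ := hx
  have e1 := hx2 0
  have e2 := hx2 1
  rw [sum_L2] at e1 e2 hx1
  simp (config := { decide := true }) [ell] at e1 e2
  have hsup := hg {0} {1}
  rw [show ({0} ∪ {1} : Finset (Fin 2)) = Finset.univ from by decide,
    show ({0} ∩ {1} : Finset (Fin 2)) = ∅ from by decide] at hsup
  have hE := hx0 ∅
  have hU := hx0 Finset.univ
  have hc : (0:ℝ) ≤ g Finset.univ + g ∅ - g {0} - g {1} := by linarith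
  rw [sum_L2, sum_L2]
  by_cases hb : b1 + b2 ≤ 1
  · simp (config := { decide := true }) [qTwo, hb]
    have ha : x {0} = b1 - x Finset.univ := by linarith
    have hbb : x {1} = b2 - x Finset.univ := by linarith
    have hcc : x ∅ = 1 - b1 - b2 + x Finset.univ := by linarith
    rw [ha, hbb, hcc]
    nlinarith [mul_nonneg hU hc]
  · simp (config := { decide := true }) [qTwo, hb]
    have ha : x {0} = 1 - b2 - x ∅ := by linarith
    have hbb : x {1} = 1 - b1 - x ∅ := by linarith
    have hcc : x Finset.univ = b1 + b2 - 1 + x ∅ := by linarith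
    rw [ha, hbb, hcc]
    nlinarith [mul_nonneg hE hc]

/-- for `m = 2` and `1 ≥ b₁ ≥ b₂ ≥ 0`, the minimum over `M_n(b)` of the
expectation of any fibrewise supermodular `f` is attained at the product measure
`(q')^{⊗n}`. -/
theorem two_asset_min {n : ℕ} (hn : 0 < n) (b1 b2 : ℝ)
    (h1 : b1 ≤ 1) (h2 : b2 ≤ b1) (h3 : 0 ≤ b2)
    (f : (Fin n → Finset (Fin 2)) → ℝ) (hf : FibSupermod f) :
    (∀ x, MemMn ![b1, b2] x →
      ∑ ω, f ω * prodM (qTwo b1 b2) ω ≤ ∑ ω, f ω * x ω) ∧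
    IsLeast {r : ℝ | ∃ x, MemMn ![b1, b2] x ∧ r = ∑ ω, f ω * x ω}
      (∑ ω, f ω * prodM (qTwo b1 b2) ω) := by
  constructor
  · intro x hx
    exact main_ind ![b1, b2] (qTwo b1 b2) (qTwo_memM1 b1 b2 h1 h2 h3)
      (qTwo_min b1 b2 h1 h2 h3) n f hf x hx
  · constructor
    · exact ⟨prodM (qTwo b1 b2),
        prod_memMn ![b1, b2] (qTwo b1 b2) (qTwo_memM1 b1 b2 h1 h2 h3) n, rfl⟩
    · rintro r ⟨x, hx, rfl⟩
      exact main_ind ![b1, b2] (qTwo b1 b2) (qTwo_memM1 b1 b2 h1 h2 h3)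
        (qTwo_min b1 b2 h1 h2 h3) n f hf x hx
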